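/- arXiv:cs/0402039 — 2 statements merged into one kernel-verified Lean document; each statement's English description precedes it below -/
import Mathlib

section
/- Let 0 ≤ m_r ≤ d_r, 0 ≤ m_f ≤ d_f and 0 ≤ m_r′ ≤ d_r′, 0 ≤ m_f′ ≤ d_f′ be reals such that d_r ≥ d_f − m_f, d_f ≥ d_r − m_r, d_r′ ≥ d_f′ − m_f′ and d_f′ ≥ d_r′ − m_r′. Set d_r″ = min(d_r, d_r′), d_f″ = min(d_f, d_f′), m_r″ = d_r″ − max(d_r − m_r, d_r′ − m_r′), m_f″ = d_f″ − max(d_f − m_f, d_f′ − m_f′). Then the following are equivalent: (i) for every signal u, Sol_BDC^{m_r,d_r,m_f,d_f}(u) ∩ Sol_BDC^{m_r′,d_r′,m_f′,d_f′}(u) ≠ ∅; (ii) d_r″ ≥ d_f″ − m_f″ and d_f″ ≥ d_r″ − m_r″. -/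
open Set

/-- A signal: a `Bool`-valued function of real time which is constant before
some `t 0` and constant on each interval `[t k, t (k+1))`, where `t` is a
strictly increasing sequence tending to `+∞`. -/
def IsSignal (x : ℝ → Bool) : Prop :=
  ∃ t : ℕ → ℝ, StrictMono t ∧ Filter.Tendsto t Filter.atTop Filter.atTop ∧
    (∀ a ∈ Set.Iio (t 0), ∀ b ∈ Set.Iio (t 0), x a = x b) ∧
    (∀ k : ℕ, ∀ s ∈ Set.Ico (t k) (t (k + 1)), x s = x (t k))

-- The infimum (logical AND) of `u` over a set `A` (true on the empty set).
open Classical in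
noncomputable def infOn (u : ℝ → Bool) (A : Set ℝ) : Bool :=
  decide (∀ ξ ∈ A, u ξ = true)

-- The supremum (logical OR) of `u` over a set `A` (false on the empty set).
open Classical in
noncomputable def supOn (u : ℝ → Bool) (A : Set ℝ) : Bool :=
  decide (∃ ξ ∈ A, u ξ = true)

-- The left limit `x(t-0)`: the constant value of `x` on `(t-ε, t)` for small `ε > 0`.
open Classical in
noncomputable def leftVal (x : ℝ → Bool) (t : ℝ) : Bool :=
  decide (∃ ε > 0, ∀ s ∈ Set.Ioo (t - ε) t, x s = true)

/-- The bounded delay condition. -/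
noncomputable def SolBDC (mr dr mf df : ℝ) (u : ℝ → Bool) : Set (ℝ → Bool) :=
  {x | IsSignal x ∧ ∀ t : ℝ,
    infOn u (Set.Icc (t - dr) (t - dr + mr)) ≤ x t ∧
    x t ≤ supOn u (Set.Icc (t - df) (t - df + mf))}

/-- The absolute inertial condition. -/
noncomputable def SolAIC (δr δf : ℝ) : Set (ℝ → Bool) :=
  {x | IsSignal x ∧ ∀ t : ℝ,
    (!leftVal x t && x t) ≤ infOn x (Set.Icc t (t + δr)) ∧
    (leftVal x t && !x t) ≤ infOn (fun ξ => !x ξ) (Set.Icc t (t + δf))}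

/-- The relative inertial condition. -/
noncomputable def SolRIC (μr δr μf δf : ℝ) (u : ℝ → Bool) : Set (ℝ → Bool) :=
  {x | IsSignal x ∧ ∀ t : ℝ,
    (!leftVal x t && x t) ≤ infOn u (Set.Icc (t - δr) (t - δr + μr)) ∧
    (leftVal x t && !x t) ≤ infOn (fun ξ => !u ξ) (Set.Icc (t - δf) (t - δf + μf))}

open Filter

/-!
A common solution `x` of both conditions gives `infOn u R ≤ x 0 ≤ supOn u F` for a rising window
`R` of one condition and a falling window `F` of the other (or the same one). A step signal
switching between two disjoint windows violates this, so all four such pairs of windows meet,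
which is condition (ii). Conversely, (ii) says that the combined rising window
`[t - dr'', t - dr'' + mr'']` meets both falling windows and the combined falling window meets both
rising windows. One of the two combined windows is nonempty, and the sliding infimum (resp.
supremum) of `u` over it is a common solution. It is a signal because signals are exactly the
functions that are constant near `-∞` and on one-sided neighbourhoods of every point.
-/

def ConstantOn (x : ℝ → Bool) (S : Set ℝ) : Prop :=
  ∀ ξ ∈ S, ∀ η ∈ S, x ξ = x η

lemma ConstantOn.mono {x : ℝ → Bool} {S T : Set ℝ} (h : ConstantOn x S) (hTS : T ⊆ S) :
    ConstantOn x T :=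
  fun ξ hξ η hη => h ξ (hTS hξ) η (hTS hη)

lemma ConstantOn.comp {x : ℝ → Bool} {S T : Set ℝ} {f : ℝ → ℝ} (h : ConstantOn x S)
    (hf : MapsTo f T S) : ConstantOn (x ∘ f) T :=
  fun _ hξ _ hη => h _ (hf hξ) _ (hf hη)

section Windows

variable {u : ℝ → Bool} {A B : Set ℝ}

lemma infOn_eq_true_iff : infOn u A = true ↔ ∀ ξ ∈ A, u ξ = true := by
  simp [infOn]

lemma supOn_eq_true_iff : supOn u A = true ↔ ∃ ξ ∈ A, u ξ = true := by
  simp [supOn]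

lemma infOn_anti (h : A ⊆ B) : infOn u B ≤ infOn u A := by
  rw [Bool.le_iff_imp, infOn_eq_true_iff, infOn_eq_true_iff]
  exact fun hB ξ hξ => hB ξ (h hξ)

lemma supOn_mono (h : A ⊆ B) : supOn u A ≤ supOn u B := by
  rw [Bool.le_iff_imp, supOn_eq_true_iff, supOn_eq_true_iff]
  exact fun ⟨ξ, hξ, hu⟩ => ⟨ξ, h hξ, hu⟩

lemma infOn_le_supOn (h : (A ∩ B).Nonempty) : infOn u A ≤ supOn u B := by
  obtain ⟨ξ, hA, hB⟩ := h
  rw [Bool.le_iff_imp, infOn_eq_true_iff, supOn_eq_true_iff]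
  exact fun hu => ⟨ξ, hB, hu ξ hA⟩

lemma supOn_eq_not_infOn_not : supOn u A = !infOn (fun ξ => !u ξ) A := by
  rw [Bool.eq_iff_iff, supOn_eq_true_iff, Bool.not_eq_true', ← Bool.not_eq_true,
    infOn_eq_true_iff]
  simp

end Windows

lemma exists_mem_Ico_of_tendsto_atTop {β : Type*} [LinearOrder β] [NoMaxOrder β]
    {t : ℕ → β} (htop : Tendsto t atTop atTop) {r : β}
    (hr : t 0 ≤ r) : ∃ k, r ∈ Ico (t k) (t (k + 1)) := by
  classical
  have h : ∃ n, r < t n := (htop.eventually_gt_atTop r).exists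
  have hpos : 0 < Nat.find h := Nat.pos_of_ne_zero fun h0 => (h0 ▸ Nat.find_spec h).not_ge hr
  refine ⟨Nat.find h - 1, not_lt.1 (Nat.find_min h (Nat.sub_lt hpos one_pos)), ?_⟩
  rw [Nat.sub_one_add_one hpos.ne']
  exact Nat.find_spec h

section Signals

variable {x u : ℝ → Bool}

lemma isSignal_iff_constantOn : IsSignal x ↔ ∃ t : ℕ → ℝ, StrictMono t ∧
    Tendsto t atTop atTop ∧
    ConstantOn x (Iio (t 0)) ∧ ∀ k, ConstantOn x (Ico (t k) (t (k + 1))) := by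
  refine exists_congr fun t => ⟨fun ⟨ht, htop, hpre, hpiece⟩ => ⟨ht, htop, hpre, ?_⟩,
    fun ⟨ht, htop, hpre, hpiece⟩ => ⟨ht, htop, hpre, ?_⟩⟩
  · exact fun k ξ hξ η hη => (hpiece k ξ hξ).trans (hpiece k η hη).symm
  · exact fun k s hs => hpiece k s hs _ (left_mem_Ico.2 (ht k.lt_succ_self))

lemma IsSignal.exists_constantOn_Iio (hx : IsSignal x) : ∃ T, ConstantOn x (Iio T) :=
  let ⟨t, _, _, hpre, _⟩ := hx
  ⟨t 0, hpre⟩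

lemma IsSignal.exists_constantOn_Ico (hx : IsSignal x) (r : ℝ) :
    ∃ ε > 0, ConstantOn x (Ico r (r + ε)) := by
  obtain ⟨t, -, htop, hpre, hpiece⟩ := isSignal_iff_constantOn.1 hx
  rcases lt_or_ge r (t 0) with hr | hr
  · exact ⟨t 0 - r, sub_pos.2 hr, hpre.mono fun s hs => by simpa using hs.2⟩
  · obtain ⟨k, hk⟩ := exists_mem_Ico_of_tendsto_atTop htop hr
    exact ⟨t (k + 1) - r, sub_pos.2 hk.2,
      (hpiece k).mono fun s hs => ⟨hk.1.trans hs.1, by simpa using hs.2⟩⟩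

lemma IsSignal.exists_constantOn_Ioo (hx : IsSignal x) (r : ℝ) :
    ∃ ε > 0, ConstantOn x (Ioo (r - ε) r) := by
  obtain ⟨t, ht, htop, hpre, hpiece⟩ := isSignal_iff_constantOn.1 hx
  rcases le_or_gt r (t 0) with hr | hr
  · exact ⟨1, one_pos, hpre.mono fun s hs => hs.2.trans_le hr⟩
  · obtain ⟨k, hk, hk'⟩ := ht.exists_between_of_tendsto_atTop htop hr
    exact ⟨r - t k, sub_pos.2 hk,
      (hpiece k).mono fun s hs => ⟨by linarith [hs.1], hs.2.trans_le hk'⟩⟩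

lemma IsSignal.not (hx : IsSignal x) : IsSignal fun t => !x t :=
  let ⟨t, ht, htop, hpre, hpiece⟩ := hx
  ⟨t, ht, htop, fun a ha b hb => congrArg Bool.not (hpre a ha b hb),
    fun k s hs => congrArg Bool.not (hpiece k s hs)⟩

lemma IsSignal.comp_sub_const (hu : IsSignal u) (a : ℝ) : IsSignal fun t => u (t - a) := by
  obtain ⟨t, ht, htop, hpre, hpiece⟩ := isSignal_iff_constantOn.1 hu
  refine isSignal_iff_constantOn.2 ⟨fun k => t k + a, fun m n h => by simpa using ht h,
    tendsto_atTop_add_const_right _ a htop, hpre.comp fun s hs => ?_,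
    fun k => (hpiece k).comp fun s hs => ?_⟩
  · simpa [sub_lt_iff_lt_add] using hs
  · exact ⟨le_sub_iff_add_le.2 hs.1, sub_lt_iff_lt_add.2 hs.2⟩

lemma isSignal_decide_le (c : ℝ) : IsSignal fun ξ => decide (c ≤ ξ) := by
  refine isSignal_iff_constantOn.2 ⟨fun k => c + k, fun m n h => by simpa using h,
    tendsto_atTop_add_const_left _ c tendsto_natCast_atTop_atTop, ?_, fun k => ?_⟩
  · intro ξ hξ η hη
    simp only [Nat.cast_zero, add_zero, mem_Iio] at hξ hη
    simp [not_le.2 hξ, not_le.2 hη]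
  · intro ξ hξ η hη
    have hk : (0 : ℝ) ≤ k := k.cast_nonneg
    have hcξ : c ≤ ξ := by linarith [hξ.1]
    have hcη : c ≤ η := by linarith [hη.1]
    simp [hcξ, hcη]

lemma isSignal_decide_lt (c : ℝ) : IsSignal fun ξ => decide (ξ < c) := by
  simpa only [← decide_not, not_le] using (isSignal_decide_le c).not

end Signals

-- The cap `r + 1` keeps the set bounded when `x` is constant on `[r, ∞)`.
noncomputable def nextSwitch (x : ℝ → Bool) (r : ℝ) : ℝ :=
  sSup {s | s ≤ r + 1 ∧ ConstantOn x (Ico r s)}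

section NextSwitch

variable {x : ℝ → Bool} {r : ℝ}

lemma le_nextSwitch {q : ℝ} (hq : q ≤ r + 1) (hx : ConstantOn x (Ico r q)) :
    q ≤ nextSwitch x r :=
  le_csSup ⟨r + 1, fun _ hs => hs.1⟩ ⟨hq, hx⟩

lemma lt_nextSwitch (hx : ∃ ε > 0, ConstantOn x (Ico r (r + ε))) : r < nextSwitch x r := by
  obtain ⟨ε, hε, hc⟩ := hx
  calc r < r + min ε 1 := lt_add_of_pos_right r (lt_min hε one_pos)
    _ ≤ nextSwitch x r := le_nextSwitch (by linarith [min_le_right ε 1])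
        (hc.mono (Ico_subset_Ico_right (by linarith [min_le_left ε 1])))

lemma constantOn_Ico_nextSwitch : ConstantOn x (Ico r (nextSwitch x r)) := by
  intro ξ hξ η hη
  have hne : {s | s ≤ r + 1 ∧ ConstantOn x (Ico r s)}.Nonempty :=
    ⟨r, by linarith, by simp [ConstantOn]⟩
  obtain ⟨s, ⟨-, hs⟩, hlt⟩ := exists_lt_of_lt_csSup hne (max_lt hξ.2 hη.2)
  exact hs ξ ⟨hξ.1, (le_max_left ξ η).trans_lt hlt⟩ η ⟨hη.1, (le_max_right ξ η).trans_lt hlt⟩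

end NextSwitch

lemma isSignal_of_constantOn {x : ℝ → Bool} (hpre : ∃ T, ConstantOn x (Iio T))
    (hright : ∀ r, ∃ ε > 0, ConstantOn x (Ico r (r + ε)))
    (hleft : ∀ r, ∃ ε > 0, ConstantOn x (Ioo (r - ε) r)) : IsSignal x := by
  obtain ⟨T, hT⟩ := hpre
  set t : ℕ → ℝ := fun n => (nextSwitch x)^[n] T
  have ht_succ (n : ℕ) : t (n + 1) = nextSwitch x (t n) := Function.iterate_succ_apply' _ _ _
  have ht : StrictMono t := strictMono_nat_of_lt_succ fun n => ht_succ n ▸ lt_nextSwitch (hright _)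
  refine isSignal_iff_constantOn.2 ⟨t, ht, ?_, hT, fun k => ht_succ k ▸ constantOn_Ico_nextSwitch⟩
  rw [tendsto_atTop_atTop_iff_of_monotone ht.monotone]
  by_contra! hbdd
  obtain ⟨b, hb⟩ := hbdd
  set L := ⨆ n, t n
  have htL (n : ℕ) : t n < L :=
    (ht n.lt_succ_self).trans_le (le_ciSup ⟨b, forall_mem_range.2 fun n => (hb n).le⟩ _)
  obtain ⟨ε, hε, hc⟩ := hleft L
  obtain ⟨n, hn⟩ := exists_lt_of_lt_ciSup (sub_lt_self L (lt_min hε one_pos))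
  -- `x` is constant on `[t n, L)`, so the switch after `t n` comes no earlier than `L`.
  have hL : L ≤ t (n + 1) := ht_succ n ▸ le_nextSwitch (by linarith [min_le_right ε 1])
    (hc.mono fun s hs => ⟨by linarith [hs.1, min_le_left ε 1], hs.2⟩)
  exact (htL (n + 1)).not_ge hL

section SlidingWindows

variable {u : ℝ → Bool} {a b : ℝ}

lemma infOn_Icc_sub_eq_of_constantOn {s₁ s₂ : ℝ} (hs : s₁ ≤ s₂)
    (ha : ConstantOn (fun t => u (t - a)) (Icc s₁ s₂))
    (hb : ConstantOn (fun t => u (t - b)) (Icc s₁ s₂)) :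
    infOn u (Icc (s₁ - a) (s₁ - b)) = infOn u (Icc (s₂ - a) (s₂ - b)) := by
  rw [Bool.eq_iff_iff, infOn_eq_true_iff, infOn_eq_true_iff]
  constructor
  · intro h ξ hξ
    rcases le_or_gt ξ (s₁ - b) with hξb | hξb
    · exact h ξ ⟨by linarith [hξ.1], hξb⟩
    · have hu : u ξ = u (s₁ - b) := by
        simpa using hb (ξ + b) ⟨by linarith, by linarith [hξ.2]⟩ s₁ ⟨le_rfl, hs⟩
      exact hu ▸ h _ ⟨by linarith [hξ.1, hξ.2], le_rfl⟩
  · intro h ξ hξ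
    rcases le_or_gt (s₂ - a) ξ with hξa | hξa
    · exact h ξ ⟨hξa, by linarith [hξ.2]⟩
    · have hu : u ξ = u (s₂ - a) := by
        simpa using ha (ξ + a) ⟨by linarith [hξ.1], by linarith⟩ s₂ ⟨hs, le_rfl⟩
      exact hu ▸ h _ ⟨le_rfl, by linarith [hξ.1, hξ.2]⟩

lemma constantOn_slidingInf {S : Set ℝ} (hS : S.OrdConnected)
    (ha : ConstantOn (fun t => u (t - a)) S) (hb : ConstantOn (fun t => u (t - b)) S) :
    ConstantOn (fun t => infOn u (Icc (t - a) (t - b))) S := by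
  intro s₁ h₁ s₂ h₂
  wlog hs : s₁ ≤ s₂ generalizing s₁ s₂
  · exact (this s₂ h₂ s₁ h₁ (le_of_not_ge hs)).symm
  exact infOn_Icc_sub_eq_of_constantOn hs (ha.mono (hS.out h₁ h₂)) (hb.mono (hS.out h₁ h₂))

lemma isSignal_slidingInf (hu : IsSignal u) (a b : ℝ) :
    IsSignal fun t => infOn u (Icc (t - a) (t - b)) := by
  have ha := hu.comp_sub_const a
  have hb := hu.comp_sub_const b
  refine isSignal_of_constantOn ?_ (fun r => ?_) (fun r => ?_)
  · obtain ⟨Ta, hTa⟩ := ha.exists_constantOn_Iio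
    obtain ⟨Tb, hTb⟩ := hb.exists_constantOn_Iio
    exact ⟨min Ta Tb, constantOn_slidingInf ordConnected_Iio
      (hTa.mono (Iio_subset_Iio (min_le_left _ _))) (hTb.mono (Iio_subset_Iio (min_le_right _ _)))⟩
  · obtain ⟨εa, hεa, hca⟩ := ha.exists_constantOn_Ico r
    obtain ⟨εb, hεb, hcb⟩ := hb.exists_constantOn_Ico r
    exact ⟨min εa εb, lt_min hεa hεb, constantOn_slidingInf ordConnected_Ico
      (hca.mono (Ico_subset_Ico_right (by simp))) (hcb.mono (Ico_subset_Ico_right (by simp)))⟩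
  · obtain ⟨εa, hεa, hca⟩ := ha.exists_constantOn_Ioo r
    obtain ⟨εb, hεb, hcb⟩ := hb.exists_constantOn_Ioo r
    exact ⟨min εa εb, lt_min hεa hεb, constantOn_slidingInf ordConnected_Ioo
      (hca.mono (Ioo_subset_Ioo_left (sub_le_sub_left (min_le_left _ _) r)))
      (hcb.mono (Ioo_subset_Ioo_left (sub_le_sub_left (min_le_right _ _) r)))⟩

lemma isSignal_slidingSup (hu : IsSignal u) (a b : ℝ) :
    IsSignal fun t => supOn u (Icc (t - a) (t - b)) := by
  simpa only [supOn_eq_not_infOn_not] using (isSignal_slidingInf hu.not a b).not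

end SlidingWindows

lemma le_and_le_of_forall_infOn_le_supOn {r s p q : ℝ}
    (h : ∀ u, IsSignal u → infOn u (Icc r s) ≤ supOn u (Icc p q)) : r ≤ q ∧ p ≤ s := by
  constructor
  · by_contra! hqr
    have hinf : infOn (fun ξ => decide (r ≤ ξ)) (Icc r s) = true :=
      infOn_eq_true_iff.2 fun ξ hξ => decide_eq_true hξ.1
    have hsup : supOn (fun ξ => decide (r ≤ ξ)) (Icc p q) = false := by
      rw [← Bool.not_eq_true, supOn_eq_true_iff]
      rintro ⟨ξ, hξ, hrξ⟩
      exact (of_decide_eq_true hrξ).not_gt (hξ.2.trans_lt hqr)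
    exact absurd (hinf ▸ hsup ▸ h _ (isSignal_decide_le r)) (by decide)
  · by_contra! hsp
    have hinf : infOn (fun ξ => decide (ξ < p)) (Icc r s) = true :=
      infOn_eq_true_iff.2 fun ξ hξ => decide_eq_true (hξ.2.trans_lt hsp)
    have hsup : supOn (fun ξ => decide (ξ < p)) (Icc p q) = false := by
      rw [← Bool.not_eq_true, supOn_eq_true_iff]
      rintro ⟨ξ, hξ, hξp⟩
      exact (of_decide_eq_true hξp).not_ge hξ.1
    exact absurd (hinf ▸ hsup ▸ h _ (isSignal_decide_lt p)) (by decide)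

section BoundedDelay

variable {u : ℝ → Bool} {mr dr mf df a b : ℝ}

lemma slidingInf_mem_solBDC (hu : IsSignal u) (hmf : 0 ≤ mf) (hba : b ≤ a) (hadr : a ≤ dr)
    (hdrb : dr - mr ≤ b) (hdfa : df - mf ≤ a) (hbdf : b ≤ df) :
    (fun t => infOn u (Icc (t - a) (t - b))) ∈ SolBDC mr dr mf df u := by
  refine ⟨isSignal_slidingInf hu a b, fun t => ⟨infOn_anti (Icc_subset_Icc ?_ ?_), infOn_le_supOn ?_⟩⟩
  · linarith
  · linarith
  · rw [Icc_inter_Icc, nonempty_Icc]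
    simp only [sup_le_iff, le_inf_iff]
    refine ⟨⟨?_, ?_⟩, ?_, ?_⟩ <;> linarith

lemma slidingSup_mem_solBDC (hu : IsSignal u) (hmr : 0 ≤ mr) (hba : b ≤ a) (hadf : a ≤ df)
    (hdfb : df - mf ≤ b) (hdra : dr - mr ≤ a) (hbdr : b ≤ dr) :
    (fun t => supOn u (Icc (t - a) (t - b))) ∈ SolBDC mr dr mf df u := by
  refine ⟨isSignal_slidingSup hu a b, fun t => ⟨infOn_le_supOn ?_, supOn_mono (Icc_subset_Icc ?_ ?_)⟩⟩
  · rw [Icc_inter_Icc, nonempty_Icc]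
    simp only [sup_le_iff, le_inf_iff]
    refine ⟨⟨?_, ?_⟩, ?_, ?_⟩ <;> linarith
  · linarith
  · linarith

lemma le_of_forall_exists_mem_solBDC {mr' dr' mf' df' : ℝ}
    (h : ∀ u, IsSignal u → ∃ x, x ∈ SolBDC mr dr mf df u ∧ x ∈ SolBDC mr' dr' mf' df' u) :
    df' - mf' ≤ dr ∧ dr - mr ≤ df' := by
  have hle := le_and_le_of_forall_infOn_le_supOn fun u hu => by
    obtain ⟨x, hx, hx'⟩ := h u hu
    exact (hx.2 0).1.trans (hx'.2 0).2
  constructor <;> linarith [hle.1, hle.2]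

end BoundedDelay

theorem bdc_inter_nonempty_iff_general (mr dr mf df : ℝ)
    (hmr : 0 ≤ mr) (hmf : 0 ≤ mf)
    (mr' dr' mf' df' : ℝ)
    (hmr' : 0 ≤ mr') (hmf' : 0 ≤ mf')
    (dr'' df'' mr'' mf'' : ℝ)
    (hdr'' : dr'' = min dr dr') (hdf'' : df'' = min df df')
    (hmr'' : mr'' = dr'' - max (dr - mr) (dr' - mr'))
    (hmf'' : mf'' = df'' - max (df - mf) (df' - mf')) :
    (∀ u : ℝ → Bool, IsSignal u →
        (SolBDC mr dr mf df u ∩ SolBDC mr' dr' mf' df' u).Nonempty) ↔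
      (dr'' ≥ df'' - mf'' ∧ df'' ≥ dr'' - mr'') := by
  subst hdr'' hdf'' hmr'' hmf''
  simp only [ge_iff_le, sub_sub_cancel]
  constructor
  · intro h
    have h11 := le_of_forall_exists_mem_solBDC fun u hu => let ⟨x, hx, _⟩ := h u hu; ⟨x, hx, hx⟩
    have h12 := le_of_forall_exists_mem_solBDC fun u hu => let ⟨x, hx, hx'⟩ := h u hu; ⟨x, hx, hx'⟩
    have h21 := le_of_forall_exists_mem_solBDC fun u hu => let ⟨x, hx, hx'⟩ := h u hu; ⟨x, hx', hx⟩
    have h22 := le_of_forall_exists_mem_solBDC fun u hu => let ⟨x, _, hx'⟩ := h u hu; ⟨x, hx', hx'⟩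
    simp only [max_le_iff, le_min_iff]
    exact ⟨⟨⟨h11.1, h12.1⟩, h21.1, h22.1⟩, ⟨h11.2, h21.2⟩, h12.2, h22.2⟩
  · rintro ⟨hf, hr⟩ u hu
    rcases le_or_gt (max (dr - mr) (dr' - mr')) (min dr dr') with hR | hR
    · exact ⟨_, slidingInf_mem_solBDC hu hmf hR (min_le_left _ _) (le_max_left _ _)
          ((le_max_left _ _).trans hf) (hr.trans (min_le_left _ _)),
        slidingInf_mem_solBDC hu hmf' hR (min_le_right _ _) (le_max_right _ _)
          ((le_max_right _ _).trans hf) (hr.trans (min_le_right _ _))⟩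
    · have hF : max (df - mf) (df' - mf') ≤ min df df' := hf.trans (hR.le.trans hr)
      exact ⟨_, slidingSup_mem_solBDC hu hmr hF (min_le_left _ _) (le_max_left _ _)
          ((le_max_left _ _).trans hr) (hf.trans (min_le_left _ _)),
        slidingSup_mem_solBDC hu hmr' hF (min_le_right _ _) (le_max_right _ _)
          ((le_max_right _ _).trans hr) (hf.trans (min_le_right _ _))⟩

theorem bdc_inter_nonempty_iff (mr dr mf df : ℝ)
    (hmr : 0 ≤ mr) (hmrdr : mr ≤ dr) (hmf : 0 ≤ mf) (hmfdf : mf ≤ df) (hcc1 : dr ≥ df - mf) (hcc2 : df ≥ dr - mr)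
    (mr' dr' mf' df' : ℝ)
    (hmr' : 0 ≤ mr') (hmrdr' : mr' ≤ dr') (hmf' : 0 ≤ mf') (hmfdf' : mf' ≤ df')
    (hcc1' : dr' ≥ df' - mf') (hcc2' : df' ≥ dr' - mr')
    (dr'' df'' mr'' mf'' : ℝ)
    (hdr'' : dr'' = min dr dr') (hdf'' : df'' = min df df')
    (hmr'' : mr'' = dr'' - max (dr - mr) (dr' - mr'))
    (hmf'' : mf'' = df'' - max (df - mf) (df' - mf')) :
    (∀ u : ℝ → Bool, IsSignal u →
        (SolBDC mr dr mf df u ∩ SolBDC mr' dr' mf' df' u).Nonempty) ↔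
      (dr'' ≥ df'' - mf'' ∧ df'' ≥ dr'' - mr'') :=
  bdc_inter_nonempty_iff_general mr dr mf df hmr hmf mr' dr' mf' df' hmr' hmf' dr'' df'' mr'' mf''
    hdr'' hdf'' hmr'' hmf''
end

section
/- Let 0 ≤ m_r ≤ d_r, 0 ≤ m_f ≤ d_f be reals with d_r ≥ d_f − m_f and d_f ≥ d_r − m_r. The following statements are equivalent: (i) for every signal u, Sol_BDC^{m_r,d_r,m_f,d_f}(u) is a singleton; (ii) d_r = d_f − m_f and d_f = d_r − m_r; (iii) m_r = m_f = 0; (iv) there exists d ≥ 0 such that for every signal u, Sol_BDC^{m_r,d_r,m_f,d_f}(u) = { t ↦ u(t − d) }. -/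
open Set

-- auxiliary lemmas

lemma isSignal_const (b : Bool) : IsSignal (fun _ => b) :=
  ⟨Nat.cast, Nat.strictMono_cast,
    tendsto_natCast_atTop_atTop, fun _ _ _ _ => rfl, fun _ _ _ => rfl⟩

lemma IsSignal.shift {u : ℝ → Bool} (hu : IsSignal u) (d : ℝ) :
    IsSignal (fun t => u (t - d)) := by
  obtain ⟨t, h1, h2, h3, h4⟩ := hu
  refine ⟨fun k => t k + d, fun i j h => by simpa using h1 h,
    Filter.tendsto_atTop_add_const_right _ d h2, ?_, ?_⟩
  · intro a ha b hb
    exact h3 (a - d) (by simp only [mem_Iio] at ha ⊢; linarith)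
      (b - d) (by simp only [mem_Iio] at hb ⊢; linarith)
  · intro k s hs
    simp only [mem_Ico] at hs
    have := h4 k (s - d) ⟨by linarith [hs.1], by linarith [hs.2]⟩
    simpa using this

lemma IsSignal.bnot {x : ℝ → Bool} (hx : IsSignal x) : IsSignal (fun t => !x t) := by
  obtain ⟨t, h1, h2, h3, h4⟩ := hx
  exact ⟨t, h1, h2, fun a ha b hb => congrArg (fun c => !c) (h3 a ha b hb),
    fun k s hs => congrArg (fun c => !c) (h4 k s hs)⟩

lemma isSignal_pulse {a : ℝ} (ha : 0 < a) :
    IsSignal (fun t => decide (0 ≤ t ∧ t < a)) := by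
  refine ⟨fun k => (k : ℝ) * a, fun i j h =>
      mul_lt_mul_of_pos_right (by exact_mod_cast h) ha,
    Filter.Tendsto.atTop_mul_const ha tendsto_natCast_atTop_atTop, ?_, ?_⟩
  · intro b hb c hc
    simp only [mem_Iio, Nat.cast_zero, zero_mul] at hb hc
    rw [decide_eq_decide]
    constructor <;> rintro ⟨h, -⟩ <;> linarith
  · intro k s hs
    obtain ⟨hs1, hs2⟩ := hs
    have hs1' : (k : ℝ) * a ≤ s := hs1
    have hs2' : s < ((k : ℝ) + 1) * a := by
      have : s < ((k + 1 : ℕ) : ℝ) * a := hs2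
      push_cast at this; exact this
    rw [decide_eq_decide]
    constructor
    · rintro ⟨h0, hlt⟩
      have hlt' : (k : ℝ) * a < a := lt_of_le_of_lt hs1' hlt
      exact ⟨mul_nonneg (Nat.cast_nonneg k) ha.le, hlt'⟩
    · rintro ⟨-, hlt⟩
      have hk : k = 0 := by
        by_contra hk
        have h1 : (1 : ℝ) ≤ (k : ℝ) := by exact_mod_cast Nat.one_le_iff_ne_zero.mpr hk
        have hlt' : (k : ℝ) * a < a := hlt
        nlinarith [mul_le_mul_of_nonneg_right h1 ha.le]
      subst hk
      norm_num at hs1' hs2'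
      exact ⟨hs1', hs2'⟩

lemma infOn_le {u : ℝ → Bool} {A : Set ℝ} {a : ℝ} (ha : a ∈ A) : infOn u A ≤ u a := by
  cases hb : infOn u A with
  | false => exact Bool.false_le _
  | true =>
    simp only [infOn, decide_eq_true_eq] at hb
    rw [hb a ha]

lemma le_supOn {u : ℝ → Bool} {A : Set ℝ} {a : ℝ} (ha : a ∈ A) : u a ≤ supOn u A := by
  cases hb : u a with
  | false => exact Bool.false_le _
  | true =>
    have : supOn u A = true := by
      simp only [supOn, decide_eq_true_eq]; exact ⟨a, ha, hb⟩
    rw [this]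

lemma infOn_Icc_self (u : ℝ → Bool) (a : ℝ) : infOn u (Set.Icc a a) = u a := by
  simp [infOn, Set.Icc_self]

lemma supOn_Icc_self (u : ℝ → Bool) (a : ℝ) : supOn u (Set.Icc a a) = u a := by
  simp [supOn, Set.Icc_self]

theorem bdc_deterministic_tfae (mr dr mf df : ℝ)
    (hmr : 0 ≤ mr) (hmrdr : mr ≤ dr) (hmf : 0 ≤ mf) (hmfdf : mf ≤ df) (hcc1 : dr ≥ df - mf) (hcc2 : df ≥ dr - mr) :
    [ ∀ u : ℝ → Bool, IsSignal u → ∃ x, SolBDC mr dr mf df u = {x},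
      dr = df - mf ∧ df = dr - mr,
      mr = 0 ∧ mf = 0,
      ∃ d : ℝ, 0 ≤ d ∧ ∀ u : ℝ → Bool, IsSignal u →
        SolBDC mr dr mf df u = {fun t => u (t - d)} ].TFAE := by
  tfae_have 2 ↔ 3 := by
    constructor <;> rintro ⟨h1, h2⟩ <;> constructor <;> linarith
  tfae_have 3 → 4 := by
    rintro ⟨h3r, h3f⟩
    subst h3r h3f
    have hd : dr = df := le_antisymm (by linarith) (by linarith)
    subst hd
    refine ⟨dr, by linarith, fun u hu => ?_⟩
    ext x
    simp only [SolBDC, mem_setOf_eq, mem_singleton_iff]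
    constructor
    · rintro ⟨hsig, hcond⟩
      funext t
      have h := hcond t
      rw [add_zero, infOn_Icc_self, supOn_Icc_self] at h
      exact le_antisymm h.2 h.1
    · rintro rfl
      refine ⟨hu.shift dr, fun t => ?_⟩
      rw [add_zero, infOn_Icc_self, supOn_Icc_self]
      exact ⟨le_refl _, le_refl _⟩
  tfae_have 4 → 1 := by
    rintro ⟨d, hd, h⟩ u hu
    exact ⟨_, h u hu⟩
  tfae_have 1 → 3 := by
    intro h1
    by_contra hcon
    have hpos : 0 < mr ∨ 0 < mf := by
      rcases eq_or_lt_of_le hmr with h | h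
      · rcases eq_or_lt_of_le hmf with h' | h'
        · exact absurd ⟨h.symm, h'.symm⟩ hcon
        · exact Or.inr h'
      · exact Or.inl h
    rcases hpos with hmr0 | hmf0
    · -- mr > 0 : pulse of length mr/2
      set u : ℝ → Bool := fun t => decide (0 ≤ t ∧ t < mr / 2) with hu_def
      have hu : IsSignal u := isSignal_pulse (by linarith)
      obtain ⟨x, hx⟩ := h1 u hu
      have hinf : ∀ t : ℝ, infOn u (Set.Icc (t - dr) (t - dr + mr)) = false := by
        intro t
        rw [infOn, decide_eq_false_iff_not]
        push_neg
        by_cases hc : 0 ≤ t - dr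
        · refine ⟨t - dr + mr, ⟨by linarith, le_refl _⟩, ?_⟩
          simp only [hu_def, ne_eq, decide_eq_true_eq, not_and, not_lt]
          intro; linarith
        · refine ⟨t - dr, ⟨le_refl _, by linarith⟩, ?_⟩
          simp only [hu_def, ne_eq, decide_eq_true_eq, not_and, not_lt]
          intro hh; exact absurd hh hc
      have hx1 : (fun _ => false) ∈ SolBDC mr dr mf df u := by
        refine ⟨isSignal_const false, fun t => ⟨?_, Bool.false_le _⟩⟩
        rw [hinf t]
      have hx2 : (fun t => u (t - df)) ∈ SolBDC mr dr mf df u := by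
        refine ⟨hu.shift df, fun t => ⟨?_, ?_⟩⟩
        · rw [hinf t]; exact Bool.false_le _
        · exact le_supOn ⟨le_refl _, by linarith⟩
      rw [hx, mem_singleton_iff] at hx1 hx2
      have heq := hx1.trans hx2.symm
      have h0 := congrFun heq df
      have h00 : u 0 = true := by
        simp only [hu_def, decide_eq_true_eq]
        exact ⟨le_refl 0, by linarith⟩
      rw [sub_self, h00] at h0
      exact absurd h0 (by simp)
    · -- mf > 0 : anti-pulse of length mf/2
      set u : ℝ → Bool := fun t => !decide (0 ≤ t ∧ t < mf / 2) with hu_def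
      have hu : IsSignal u := (isSignal_pulse (by linarith : (0:ℝ) < mf / 2)).bnot
      obtain ⟨x, hx⟩ := h1 u hu
      have hsup : ∀ t : ℝ, supOn u (Set.Icc (t - df) (t - df + mf)) = true := by
        intro t
        simp only [supOn, decide_eq_true_eq]
        by_cases hc : 0 ≤ t - df
        · refine ⟨t - df + mf, ⟨by linarith, le_refl _⟩, ?_⟩
          simp only [hu_def, Bool.not_eq_true', decide_eq_false_iff_not, not_and, not_lt]
          intro; linarith
        · refine ⟨t - df, ⟨le_refl _, by linarith⟩, ?_⟩
          simp only [hu_def, Bool.not_eq_true', decide_eq_false_iff_not, not_and, not_lt]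
          intro hh; exact absurd hh hc
      have hx1 : (fun _ => true) ∈ SolBDC mr dr mf df u := by
        refine ⟨isSignal_const true, fun t => ⟨Bool.le_true _, ?_⟩⟩
        rw [hsup t]
      have hx2 : (fun t => u (t - dr)) ∈ SolBDC mr dr mf df u := by
        refine ⟨hu.shift dr, fun t => ⟨?_, ?_⟩⟩
        · exact infOn_le ⟨le_refl _, by linarith⟩
        · rw [hsup t]; exact Bool.le_true _
      rw [hx, mem_singleton_iff] at hx1 hx2
      have heq := hx1.trans hx2.symm
      have h0 := congrFun heq dr
      have h00 : u 0 = false := by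
        simp only [hu_def, Bool.not_eq_false', decide_eq_true_eq]
        exact ⟨le_refl 0, by linarith⟩
      rw [sub_self, h00] at h0
      exact absurd h0 (by simp)
  tfae_finish
end
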